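/- Let {θ̂ₙ : n even} be any collection of homogeneous Δ-cables with θ̂ₙ = (θₙ⁽ʲ⁾) rooted at θₙ⁽⁰⁾ = Σ_{i=0}^{n}(-1)ⁱxᵢx_{n-i}. Then for each j ≥ 0 the set {θ_{2i}^{(j-2i)} : 0 ≤ i ≤ j/2} is a k-basis of the space Ω_{(2,j)} of quadratic forms of weight j, and consequently the vertices of all the cables θ̂ₙ form a k-basis of the space Ω₂ of all quadratic forms in Ω. -/

import Mathlib

open MvPolynomial

/-- The down operator `Δ` on `Ω = k[x₀, x₁, x₂, ...]`. -/
noncomputable def downOp (k : Type*) [Field k] [CharZero k] :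
    Derivation k (MvPolynomial ℕ k) (MvPolynomial ℕ k) :=
  MvPolynomial.mkDerivation k (fun n => if n = 0 then 0 else X (n - 1))

/-- `θₙ⁽⁰⁾ = Σ_{i=0}^{n} (-1)ⁱ xᵢ x_{n-i}`. -/
noncomputable def theta0 (k : Type*) [Field k] [CharZero k] (n : ℕ) : MvPolynomial ℕ k :=
  ∑ i ∈ Finset.range (n + 1), (-1 : MvPolynomial ℕ k) ^ i * X i * X (n - i)

/-- `Ω_{(2,m)}`, the span of the monomials `xᵢ x_{m-i}` for `0 ≤ i ≤ m`. -/
noncomputable def quadSpace (k : Type*) [Field k] [CharZero k] (m : ℕ) :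
    Submodule k (MvPolynomial ℕ k) :=
  Submodule.span k {p | ∃ i ≤ m, p = X i * X (m - i)}

/-- `Ω₂`, the span of all quadratic monomials `xᵢ xₘ`. -/
noncomputable def quadTotal (k : Type*) [Field k] [CharZero k] :
    Submodule k (MvPolynomial ℕ k) :=
  Submodule.span k {p | ∃ i m : ℕ, p = X i * X m}

/-!
Applying `Δ` to the vertices of weight `j + 1` gives the vertices of weight `j`, except for the
root `θ_{j+1}^{(0)}` when `j + 1` is even; `Δ` kills that root (the terms of `Δθₙ⁽⁰⁾` telescope)
and it is nonzero (its value at `(1, 1, …)` is `1`). Hence linear independence in weight `j`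
propagates to weight `j + 1`. Since `Ω_{(2,j)}` is spanned by the `j / 2 + 1` monomials
`xᵢ x_{j-i}` with `i ≤ j / 2`, the `j / 2 + 1` vertices of weight `j` form a basis of it, and
since the weights are independent in the weight grading of `k[x₀, x₁, …]`, all vertices
together form a basis of `Ω₂`.
-/

section LinearAlgebra

variable {K V W ι : Type*} [Field K] [AddCommGroup V] [Module K V] [AddCommGroup W] [Module K W]

theorem LinearIndepOn.insert_of_mem_ker (f : V →ₗ[K] W) {v : ι → V} {s : Set ι} {a : ι}
    (hs : LinearIndepOn K (f ∘ v) s) (ha : v a ∈ LinearMap.ker f) (ha₀ : v a ≠ 0) :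
    LinearIndepOn K v (insert a s) := by
  refine (hs.of_comp f).insert fun hspan => ha₀ ?_
  rw [Set.image_eq_range] at hspan
  exact Submodule.disjoint_def.mp (Submodule.range_ker_disjoint hs) _ hspan ha

theorem LinearIndependent.span_eq_of_finrank_le [Fintype ι] {v : ι → V} {U : Submodule K V}
    [FiniteDimensional K U] (hv : LinearIndependent K v) (hmem : ∀ i, v i ∈ U)
    (hdim : Module.finrank K U ≤ Fintype.card ι) : Submodule.span K (Set.range v) = U :=
  Submodule.eq_of_le_of_finrank_le (Submodule.span_le.mpr (Set.range_subset_iff.mpr hmem))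
    (by rwa [finrank_span_eq_card hv])

end LinearAlgebra

theorem linearIndependent_of_iSupIndep_of_fibers {R M ι J : Type*} [Ring R] [AddCommGroup M]
    [Module R M] {A : J → Submodule R M} (hA : iSupIndep A) (deg : ι → J) {v : ι → M}
    (hv : ∀ i, v i ∈ A (deg i))
    (hfib : ∀ j, LinearIndependent R (fun i : {i // deg i = j} => v i)) :
    LinearIndependent R v := by
  classical
  rw [linearIndependent_iff']
  intro s g hsum i hi
  set u : J → M := fun j => ∑ q ∈ s with deg q = j, g q • v q
  have hu_mem : ∀ j, u j ∈ A j := fun j =>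
    Submodule.sum_mem _ fun q hq => Submodule.smul_mem _ _ ((Finset.mem_filter.mp hq).2 ▸ hv q)
  have hu_sum : ∑ j ∈ s.image deg, u j = 0 := by
    rw [Finset.sum_fiberwise_of_maps_to fun q hq => Finset.mem_image_of_mem deg hq, hsum]
  have hu_zero : u (deg i) = 0 :=
    (iSupIndep_iff_finsetSum_eq_zero_imp_eq_zero A).mp hA _ u (fun j _ => hu_mem j) hu_sum _
      (Finset.mem_image_of_mem deg hi)
  have hfib_sum : ∑ q ∈ s.subtype (deg · = deg i), g q • v q = 0 := by
    rw [Finset.sum_subtype_eq_sum_filter (fun q => g q • v q)]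
    exact hu_zero
  exact linearIndependent_iff'.mp (hfib (deg i)) _ (fun q => g q) hfib_sum ⟨i, rfl⟩
    (Finset.mem_subtype.mpr hi)

section DownOp

variable {k : Type*} [Field k] [CharZero k]

theorem downOp_X_zero : downOp k (X 0) = 0 := by simp [downOp, mkDerivation_X]

theorem downOp_X_succ (m : ℕ) : downOp k (X (m + 1)) = X m := by simp [downOp, mkDerivation_X]

theorem downOp_theta0 (n : ℕ) : downOp k (theta0 k n) = 0 := by
  have hterm : ∀ i, downOp k ((-1) ^ i * X i * X (n - i)) =
      (-1) ^ i * (X i * downOp k (X (n - i))) + (-1) ^ i * (X (n - i) * downOp k (X i)) := by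
    intro i
    simp only [Derivation.leibniz, Derivation.leibniz_pow, map_neg, Derivation.map_one_eq_zero,
      smul_eq_mul]
    ring
  rw [theta0, map_sum, Finset.sum_congr rfl fun i _ => hterm i, Finset.sum_add_distrib,
    Finset.sum_range_succ, Finset.sum_range_succ', Nat.sub_self, downOp_X_zero]
  simp only [mul_zero, add_zero, ← Finset.sum_add_distrib]
  refine Finset.sum_eq_zero fun i hi => ?_
  rw [Finset.mem_range] at hi
  obtain ⟨m, rfl⟩ : ∃ m, n = i + 1 + m := ⟨n - (i + 1), by omega⟩
  rw [show i + 1 + m - i = m + 1 by omega, show i + 1 + m - (i + 1) = m by omega, downOp_X_succ,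
    downOp_X_succ]
  ring

theorem theta0_ne_zero {n : ℕ} (hn : Even n) : theta0 k n ≠ 0 := by
  intro h
  have := congrArg (eval (fun _ => (1 : k))) h
  simp only [theta0, map_sum, map_mul, map_pow, map_neg, map_one, eval_X, mul_one, map_zero,
    neg_one_geom_sum, if_neg (Nat.not_even_iff_odd.mpr hn.add_one)] at this
  exact one_ne_zero this

end DownOp

section QuadSpace

variable (k : Type*) [Field k] [CharZero k]

theorem span_range_X_mul_X (j : ℕ) :
    Submodule.span k
        (Set.range fun i : Fin (j / 2 + 1) => (X (i : ℕ) * X (j - i) : MvPolynomial ℕ k)) =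
      quadSpace k j := by
  refine le_antisymm (Submodule.span_le.mpr ?_) (Submodule.span_le.mpr ?_)
  · rintro _ ⟨i, rfl⟩
    exact Submodule.subset_span ⟨i, by omega, rfl⟩
  · rintro _ ⟨i, hi, rfl⟩
    apply Submodule.subset_span
    by_cases h : i ≤ j / 2
    · exact ⟨⟨i, by omega⟩, rfl⟩
    · refine ⟨⟨j - i, by omega⟩, ?_⟩
      simp only [show j - (j - i) = i by omega, mul_comm]

instance (j : ℕ) : FiniteDimensional k (quadSpace k j) := by
  rw [← span_range_X_mul_X]
  exact FiniteDimensional.span_of_finite k (Set.finite_range _)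

theorem finrank_quadSpace_le (j : ℕ) : Module.finrank k (quadSpace k j) ≤ j / 2 + 1 := by
  rw [← span_range_X_mul_X]
  simpa [Set.finrank] using finrank_range_le_card (R := k)
    fun i : Fin (j / 2 + 1) => (X (i : ℕ) * X (j - i) : MvPolynomial ℕ k)

theorem quadSpace_le_weightedHomogeneousSubmodule (j : ℕ) :
    quadSpace k j ≤ weightedHomogeneousSubmodule k (id : ℕ → ℕ) j := by
  refine Submodule.span_le.mpr ?_
  rintro _ ⟨i, hi, rfl⟩
  have := (isWeightedHomogeneous_X k (id : ℕ → ℕ) i).mul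
    (isWeightedHomogeneous_X k (id : ℕ → ℕ) (j - i))
  simpa [show i + (j - i) = j by omega] using this

theorem iSupIndep_quadSpace : iSupIndep (quadSpace k) :=
  letI := weightedDecomposition k (id : ℕ → ℕ)
  (DirectSum.Decomposition.isInternal (weightedHomogeneousSubmodule k id)).submodule_iSupIndep.mono
    (quadSpace_le_weightedHomogeneousSubmodule k)

theorem quadSpace_le_quadTotal (j : ℕ) : quadSpace k j ≤ quadTotal k :=
  Submodule.span_le.mpr fun _ ⟨i, _, hp⟩ => Submodule.subset_span ⟨i, j - i, hp⟩

theorem X_mul_X_mem_quadSpace (i m : ℕ) : (X i * X m : MvPolynomial ℕ k) ∈ quadSpace k (i + m) :=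
  Submodule.subset_span ⟨i, by omega, by rw [Nat.add_sub_cancel_left]⟩

end QuadSpace

section Cables

variable {k : Type*} [Field k] [CharZero k] {θ : ℕ → ℕ → MvPolynomial ℕ k}

theorem linearIndepOn_cable_vertices (hroot : ∀ n : ℕ, Even n → θ n 0 = theta0 k n)
    (hcable : ∀ n : ℕ, Even n → ∀ j : ℕ, downOp k (θ n (j + 1)) = θ n j) (j : ℕ) :
    LinearIndepOn k (fun i => θ (2 * i) (j - 2 * i)) {i | 2 * i ≤ j} := by
  induction j with
  | zero =>
    rw [show {i | 2 * i ≤ 0} = {0} by ext; simp, linearIndepOn_singleton_iff]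
    simpa [hroot 0 Even.zero] using theta0_ne_zero (k := k) Even.zero
  | succ j ih =>
    have hmap : LinearIndepOn k (downOp k ∘ fun i => θ (2 * i) (j + 1 - 2 * i))
        {i | 2 * i ≤ j} := by
      refine ih.congr fun i (hi : 2 * i ≤ j) => ?_
      simp only [Function.comp_apply, show j + 1 - 2 * i = j - 2 * i + 1 by omega,
        hcable _ (even_two_mul i)]
    rcases Nat.even_or_odd j with ⟨m, rfl⟩ | ⟨m, rfl⟩
    · rw [show {i | 2 * i ≤ m + m + 1} = {i | 2 * i ≤ m + m} by
        ext; simp only [Set.mem_ofPred_eq]; omega]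
      exact hmap.of_comp (downOp k : MvPolynomial ℕ k →ₗ[k] MvPolynomial ℕ k)
    · rw [show {i | 2 * i ≤ 2 * m + 1 + 1} = insert (m + 1) {i | 2 * i ≤ 2 * m + 1} by
        ext; simp only [Set.mem_ofPred_eq, Set.mem_insert_iff]; omega]
      have hroot' : θ (2 * (m + 1)) (2 * m + 1 + 1 - 2 * (m + 1)) = theta0 k (2 * (m + 1)) := by
        rw [show 2 * m + 1 + 1 - 2 * (m + 1) = 0 by omega, hroot _ (even_two_mul _)]
      refine hmap.insert_of_mem_ker (downOp k : MvPolynomial ℕ k →ₗ[k] MvPolynomial ℕ k) ?_ ?_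
      · simp only [LinearMap.mem_ker, hroot']
        exact downOp_theta0 _
      · simpa only [hroot'] using theta0_ne_zero (even_two_mul _)

theorem linearIndependent_cable_vertices_fin (hroot : ∀ n : ℕ, Even n → θ n 0 = theta0 k n)
    (hcable : ∀ n : ℕ, Even n → ∀ j : ℕ, downOp k (θ n (j + 1)) = θ n j) (j : ℕ) :
    LinearIndependent k (fun i : Fin (j / 2 + 1) => θ (2 * (i : ℕ)) (j - 2 * (i : ℕ))) :=
  (linearIndepOn_cable_vertices hroot hcable j).comp
    (fun i : Fin (j / 2 + 1) => ⟨i, show 2 * (i : ℕ) ≤ j by have := i.isLt; omega⟩)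
    fun _ _ h => Fin.ext (congrArg Subtype.val h)

theorem linearIndependent_cable_vertices_of_weight (hroot : ∀ n : ℕ, Even n → θ n 0 = theta0 k n)
    (hcable : ∀ n : ℕ, Even n → ∀ j : ℕ, downOp k (θ n (j + 1)) = θ n j) (j : ℕ) :
    LinearIndependent k (fun p : {p : ℕ × ℕ // 2 * p.1 + p.2 = j} => θ (2 * p.1.1) p.1.2) := by
  have h := (linearIndepOn_cable_vertices hroot hcable j).comp
    (fun p : {p : ℕ × ℕ // 2 * p.1 + p.2 = j} => ⟨p.1.1, show 2 * p.1.1 ≤ j by omega⟩)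
    fun p p' h => by
      have h₁ : p.1.1 = p'.1.1 := congrArg Subtype.val h
      exact Subtype.ext (Prod.ext h₁ (by have := p.2; have := p'.2; omega))
  convert h using 1
  funext ⟨⟨a, b⟩, hab⟩
  simp [← hab]

end Cables

/-- Given any collection of homogeneous `Δ`-cables `θ̂ₙ` (for even `n`) rooted at `θₙ⁽⁰⁾`,
for each `j ≥ 0` the set `{θ_{2i}^{(j-2i)} : 0 ≤ i ≤ j/2}` is a basis of `Ω_{(2,j)}`, and
the vertices of all the cables form a basis of `Ω₂`. -/
theorem delta_basis_of_cables (k : Type*) [Field k] [CharZero k]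
    (θ : ℕ → ℕ → MvPolynomial ℕ k)
    (hroot : ∀ n : ℕ, Even n → θ n 0 = theta0 k n)
    (hcable : ∀ n : ℕ, Even n → ∀ j : ℕ, downOp k (θ n (j + 1)) = θ n j)
    (hhom : ∀ n : ℕ, Even n → ∀ j : ℕ, θ n j ∈ quadSpace k (n + j)) :
    (∀ j : ℕ,
      LinearIndependent k (fun i : Fin (j / 2 + 1) => θ (2 * (i : ℕ)) (j - 2 * (i : ℕ))) ∧
      Submodule.span k
          (Set.range (fun i : Fin (j / 2 + 1) => θ (2 * (i : ℕ)) (j - 2 * (i : ℕ)))) =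
        quadSpace k j) ∧
    LinearIndependent k (fun p : ℕ × ℕ => θ (2 * p.1) p.2) ∧
    Submodule.span k (Set.range (fun p : ℕ × ℕ => θ (2 * p.1) p.2)) = quadTotal k := by
  have hvertex (p : ℕ × ℕ) : θ (2 * p.1) p.2 ∈ quadSpace k (2 * p.1 + p.2) :=
    hhom _ (even_two_mul _) _
  have hli := linearIndependent_cable_vertices_fin hroot hcable
  have hspan (j : ℕ) : Submodule.span k
      (Set.range fun i : Fin (j / 2 + 1) => θ (2 * (i : ℕ)) (j - 2 * (i : ℕ))) = quadSpace k j :=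
    (hli j).span_eq_of_finrank_le
      (fun i => by simpa [show 2 * (i : ℕ) + (j - 2 * i) = j by omega] using hvertex (i, j - 2 * i))
      (by simpa using finrank_quadSpace_le k j)
  refine ⟨fun j => ⟨hli j, hspan j⟩, ?_, ?_⟩
  · exact linearIndependent_of_iSupIndep_of_fibers (iSupIndep_quadSpace k)
      (fun p : ℕ × ℕ => 2 * p.1 + p.2) (v := fun p : ℕ × ℕ => θ (2 * p.1) p.2) hvertex
      (linearIndependent_cable_vertices_of_weight hroot hcable)
  · refine le_antisymm (Submodule.span_le.mpr ?_) (Submodule.span_le.mpr ?_)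
    · rintro _ ⟨p, rfl⟩
      exact quadSpace_le_quadTotal k _ (hvertex p)
    · rintro _ ⟨i, m, rfl⟩
      have h := X_mul_X_mem_quadSpace k i m
      rw [← hspan] at h
      refine Submodule.span_mono (Set.range_subset_iff.mpr fun q => ?_) h
      exact ⟨(q, i + m - 2 * q), rfl⟩
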